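/- arXiv:2009.01150 — 5 statements merged into one kernel-verified Lean document; each statement's English description precedes it below -/
import Mathlib

section
/- In the Baumslag-Solitar group G = BS(1,-1) = ⟨a,t | t⁻¹at = a⁻¹⟩ (the Klein bottle group), for every s ≥ 1 the (s+1)-st term of the lower central series equals the cyclic subgroup generated by a^{2^s}: γ_{s+1}G = ⟨a^{2^s}⟩. -/
/-- The defining relation of the Baumslag-Solitar group `BS(m,n)`:
`t⁻¹ * a^m * t * a^(-n)`. -/
def BSrels (m n : ℤ) : Set (FreeGroup (Fin 2)) :=
  {(FreeGroup.of 1)⁻¹ * (FreeGroup.of 0) ^ m * (FreeGroup.of 1) * ((FreeGroup.of 0) ^ n)⁻¹}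

/-- The Baumslag-Solitar group `BS(m,n) = ⟨a, t ∣ t⁻¹ aᵐ t = aⁿ⟩`. -/
abbrev BS (m n : ℤ) : Type := PresentedGroup (BSrels m n)

/-- The generator `a` of `BS(m,n)`. -/
def bsa (m n : ℤ) : BS m n := PresentedGroup.of 0

/-- The generator `t` of `BS(m,n)`. -/
def bst (m n : ℤ) : BS m n := PresentedGroup.of 1

/-! The inner automorphisms of `G = BS(1,-1)` act on `⟨a⟩` through the orientation character
`ε : G →* ℤˣ`, `a ↦ 1`, `t ↦ -1`: `g aⁿ g⁻¹ = a^(ε(g) n)`. Hence `⁅aⁿ, g⁆ = a^((1 - ε(g)) n)` lies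
in `⟨a²ⁿ⟩`, and equals `a²ⁿ` for `g = t`, so `⁅⟨aⁿ⟩, G⁆ = ⟨a²ⁿ⟩`. The induction starts from
`⁅G, G⁆ = ⟨a²⟩`, which holds because `⟨a²⟩` is normal and the generators commute modulo it. -/

open scoped commutatorElement

namespace Subgroup

theorem commutator_top_le_of_closure_eq_top {G : Type*} [Group G] {S : Set G}
    (hS : closure S = ⊤) {N : Subgroup G} [N.Normal]
    (h : ∀ x ∈ S, ∀ y ∈ S, ⁅x, y⁆ ∈ N) : ⁅(⊤ : Subgroup G), ⊤⁆ ≤ N := by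
  set f := QuotientGroup.mk' N
  have hcomm : ∀ x ∈ f '' S, ∀ y ∈ f '' S, x * y = y * x := by
    rintro _ ⟨x, hx, rfl⟩ _ ⟨y, hy, rfl⟩
    rw [← commutatorElement_eq_one_iff_mul_comm, ← map_commutatorElement,
      QuotientGroup.mk'_apply, QuotientGroup.eq_one_iff]
    exact h x hx y hy
  have hrange : f.range = closure (f '' S) := by
    rw [← MonoidHom.map_closure, hS, MonoidHom.range_eq_map]
  have hbot : ⁅f.range, f.range⁆ = ⊥ :=
    commutator_self_eq_bot_iff.2 (hrange ▸ isMulCommutative_closure hcomm)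
  rw [← _root_.commutator_def, ← QuotientGroup.ker_mk' N, ← map_eq_bot_iff, map_commutator_eq,
    hbot]

end Subgroup

namespace BS

open Subgroup

theorem closure_bsa_bst (m n : ℤ) : closure {bsa m n, bst m n} = ⊤ := by
  rw [← PresentedGroup.closure_range_of]
  congr 1
  ext x
  simp [Fin.exists_fin_two, bsa, bst, eq_comm]

theorem bst_mul_bsa_mul_bst_inv : bst 1 (-1) * bsa 1 (-1) * (bst 1 (-1))⁻¹ = (bsa 1 (-1))⁻¹ := by
  have hrel := PresentedGroup.one_of_mem (rels := BSrels 1 (-1)) rfl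
  simp only [map_mul, map_inv, zpow_one, zpow_neg, inv_inv] at hrel
  have hconj : (bst 1 (-1))⁻¹ * bsa 1 (-1) * bst 1 (-1) = (bsa 1 (-1))⁻¹ :=
    mul_eq_one_iff_eq_inv.mp hrel
  conv_lhs => rw [← inv_inv (bsa 1 (-1)), ← hconj]
  group

def orientation : BS 1 (-1) →* ℤˣ :=
  PresentedGroup.toGroup (f := ![1, -1]) (by rintro r rfl; simp)

@[simp]
theorem orientation_bsa : orientation (bsa 1 (-1)) = 1 := PresentedGroup.toGroup.of _

@[simp]
theorem orientation_bst : orientation (bst 1 (-1)) = -1 := PresentedGroup.toGroup.of _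

theorem mul_bsa_zpow_mul_inv (g : BS 1 (-1)) (k : ℤ) :
    g * bsa 1 (-1) ^ k * g⁻¹ = bsa 1 (-1) ^ ((orientation g : ℤ) * k) := by
  have hg : g ∈ closure {bsa 1 (-1), bst 1 (-1)} := closure_bsa_bst 1 (-1) ▸ mem_top g
  induction hg using closure_induction generalizing k with
  | mem g hg =>
    rcases hg with rfl | rfl
    · rw [orientation_bsa, Units.val_one, one_mul]
      group
    · rw [← conj_zpow, bst_mul_bsa_mul_bst_inv]
      simp
  | one => simp
  | mul g h _ _ ihg ihh =>
    calc g * h * bsa 1 (-1) ^ k * (g * h)⁻¹ = g * (h * bsa 1 (-1) ^ k * h⁻¹) * g⁻¹ := by group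
      _ = bsa 1 (-1) ^ ((orientation (g * h) : ℤ) * k) := by
        rw [ihh, ihg, map_mul, Units.val_mul, mul_assoc]
  | inv g _ ih =>
    rw [map_inv, Int.units_inv_eq_self]
    calc g⁻¹ * bsa 1 (-1) ^ k * g⁻¹⁻¹
        = g⁻¹ * bsa 1 (-1) ^ ((orientation g : ℤ) * (orientation g * k)) * g := by
          rw [← mul_assoc, ← Units.val_mul, Int.units_mul_self, Units.val_one, one_mul, inv_inv]
      _ = bsa 1 (-1) ^ ((orientation g : ℤ) * k) := by
          rw [← ih]; group

instance zpowers_bsa_zpow_normal (m : ℤ) : (zpowers (bsa 1 (-1) ^ m)).Normal where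
  conj_mem x hx g := by
    obtain ⟨k, rfl⟩ := mem_zpowers_iff.mp hx
    rw [← zpow_mul, mul_bsa_zpow_mul_inv]
    exact mem_zpowers_iff.mpr ⟨orientation g * k, by rw [← zpow_mul]; ring_nf⟩

theorem commutatorElement_bsa_zpow (n : ℤ) (g : BS 1 (-1)) :
    ⁅bsa 1 (-1) ^ n, g⁆ = bsa 1 (-1) ^ ((1 - orientation g : ℤ) * n) :=
  calc ⁅bsa 1 (-1) ^ n, g⁆ = bsa 1 (-1) ^ n * (g * bsa 1 (-1) ^ (-n) * g⁻¹) := by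
        rw [commutatorElement_def, zpow_neg]; group
    _ = bsa 1 (-1) ^ ((1 - orientation g : ℤ) * n) := by
        rw [mul_bsa_zpow_mul_inv, ← zpow_add]; ring_nf

theorem commutatorElement_bsa_zpow_bst (n : ℤ) :
    ⁅bsa 1 (-1) ^ n, bst 1 (-1)⁆ = bsa 1 (-1) ^ (2 * n) := by
  rw [commutatorElement_bsa_zpow, orientation_bst, Units.val_neg, Units.val_one, sub_neg_eq_add,
    one_add_one_eq_two]

theorem commutator_zpowers_bsa_zpow_top (n : ℤ) :
    ⁅zpowers (bsa 1 (-1) ^ n), ⊤⁆ = zpowers (bsa 1 (-1) ^ (2 * n)) := by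
  refine le_antisymm (commutator_le.2 fun x hx g _ ↦ ?_) (zpowers_le.2 ?_)
  · obtain ⟨k, rfl⟩ := mem_zpowers_iff.mp hx
    have hdvd : 2 ∣ 1 - (orientation g : ℤ) := by
      rcases Int.units_eq_one_or (orientation g) with h | h <;> simp [h]
    obtain ⟨j, hj⟩ := hdvd
    rw [← zpow_mul, commutatorElement_bsa_zpow, hj]
    exact mem_zpowers_iff.mpr ⟨j * k, by rw [← zpow_mul]; ring_nf⟩
  · rw [← commutatorElement_bsa_zpow_bst]
    exact commutator_mem_commutator (mem_zpowers _) (mem_top _)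

theorem commutator_top_top : ⁅(⊤ : Subgroup (BS 1 (-1))), ⊤⁆ = zpowers (bsa 1 (-1) ^ (2 : ℤ)) := by
  have hat : ⁅bsa 1 (-1), bst 1 (-1)⁆ = bsa 1 (-1) ^ (2 : ℤ) := by
    simpa using commutatorElement_bsa_zpow_bst 1
  refine le_antisymm (commutator_top_le_of_closure_eq_top (closure_bsa_bst 1 (-1)) ?_)
    (zpowers_le.2 (hat ▸ commutator_mem_commutator (mem_top (bsa 1 (-1))) (mem_top (bst 1 (-1)))))
  rintro x (rfl | rfl) y (rfl | rfl)
  · exact commutatorElement_self (bsa 1 (-1)) ▸ one_mem _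
  · exact hat ▸ mem_zpowers _
  · rw [← commutatorElement_inv, hat]
    exact inv_mem (mem_zpowers _)
  · exact commutatorElement_self (bst 1 (-1)) ▸ one_mem _

end BS

/-- Mathlib indexes the lower central series from `0`: `lowerCentralSeries G s` is `γ_{s+1} G`. -/
theorem klein_bottle_lowerCentralSeries (s : ℕ) (hs : 1 ≤ s) :
    (⊤ : Subgroup (BS 1 (-1))).lowerCentralSeries s = Subgroup.zpowers (bsa 1 (-1) ^ ((2 : ℤ) ^ s)) := by
  induction s, hs using Nat.le_induction with
  | base =>
    rw [Subgroup.lowerCentralSeries_succ, Subgroup.lowerCentralSeries_zero, BS.commutator_top_top,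
      pow_one]
  | succ s _ ih =>
    rw [Subgroup.lowerCentralSeries_succ, ih, BS.commutator_zpowers_bsa_zpow_top, pow_succ,
      mul_comm]
end

section
/- The Klein bottle group BS(1,-1) = ⟨a,t | t⁻¹at = a⁻¹⟩ is residually nilpotent, i.e., the intersection of all terms of its lower central series is trivial. -/
/-!
`BS(1,-1)` is the semidirect product `ℤ ⋊ ℤ` in which the generator `t` of the second factor acts
on the first by negation: sending `a ↦ (1, 0)`, `t ↦ (0, 1)` has a left inverse, obtained from the
universal property of the semidirect product, so it is injective and it suffices to treat `ℤ ⋊ ℤ`.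
There `⁅(m, 0), (b, u)⁆ = ((1 - (-1)ᵘ) m, 0)`, and `1 - (-1)ᵘ` is even, so by induction the
`(n+1)`-st term of the lower central series lies in `2ⁿℤ × 0`. The only integer divisible by every
power of `2` is `0`.
-/

theorem Subgroup.iInf_lowerCentralSeries_eq_bot_of_injective {G H : Type*} [Group G] [Group H]
    {f : G →* H} (hf : Function.Injective f)
    (hH : ⨅ n, (⊤ : Subgroup H).lowerCentralSeries n = ⊥) :
    ⨅ n, (⊤ : Subgroup G).lowerCentralSeries n = ⊥ := by
  refine (Subgroup.eq_bot_iff_forall _).2 fun g hg => hf ?_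
  rw [map_one, ← Subgroup.mem_bot, ← hH, Subgroup.mem_iInf]
  intro n
  have hmap : ((⊤ : Subgroup G).lowerCentralSeries n).map f ≤
      (⊤ : Subgroup H).lowerCentralSeries n := by
    rw [Subgroup.map_lowerCentralSeries]
    exact Subgroup.lowerCentralSeries_mono n le_top
  exact hmap ⟨g, Subgroup.mem_iInf.1 hg n, rfl⟩

theorem Int.eq_zero_of_forall_pow_dvd {a m : ℤ} (ha : a.natAbs ≠ 1) (h : ∀ n : ℕ, a ^ n ∣ m) :
    m = 0 := by
  by_contra hm
  obtain ⟨n, hn⟩ := Int.finiteMultiplicity_iff.2 ⟨ha, hm⟩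
  exact hn (h (n + 1))

theorem MulAut.zpow_apply_of_apply_eq_inv {G : Type*} [Group G] {σ : MulAut G} {x : G}
    (h : σ x = x⁻¹) (k : ℤ) : (σ ^ k) x = x ^ (k.negOnePow : ℤ) := by
  have h' : σ⁻¹ x = x⁻¹ := by rw [MulAut.inv_apply, MulEquiv.symm_apply_eq, map_inv, h, inv_inv]
  induction k using Int.induction_on with
  | zero => simp
  | succ k ih =>
    rw [zpow_add_one, MulAut.mul_apply, h, map_inv, ih, Int.negOnePow_succ, Units.val_neg, zpow_neg]
  | pred k ih =>
    rw [zpow_sub_one, MulAut.mul_apply, h', map_inv, ih, Int.negOnePow_sub, Int.negOnePow_one]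
    simp [zpow_neg]

theorem zpow_mul_mul_zpow_inv_of_inv_mul_mul_eq_inv {G : Type*} [Group G] {a t : G}
    (h : t⁻¹ * a * t = a⁻¹) (k : ℤ) : t ^ k * a * (t ^ k)⁻¹ = a ^ (k.negOnePow : ℤ) := by
  have := MulAut.zpow_apply_of_apply_eq_inv (σ := MulAut.conj t⁻¹) (x := a)
    (by rw [MulAut.conj_apply, inv_inv, h]) (-k)
  rwa [← map_zpow, MulAut.conj_apply, inv_zpow', neg_neg, Int.negOnePow_neg] at this

theorem inv_bst_mul_bsa_mul_bst :
    (bst 1 (-1))⁻¹ * bsa 1 (-1) * bst 1 (-1) = (bsa 1 (-1))⁻¹ := by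
  have := PresentedGroup.one_of_mem (rels := BSrels 1 (-1)) rfl
  simp only [Int.reduceNeg, Fin.isValue, zpow_ofNat, pow_one, zpow_neg, inv_inv, map_mul,
    map_inv] at this
  exact mul_eq_one_iff_eq_inv.1 this

namespace KleinBottle

open SemidirectProduct
open scoped commutatorElement

def signAction : Multiplicative ℤ →* MulAut (Multiplicative ℤ) :=
  zpowersHom _ (MulEquiv.inv _)

theorem signAction_apply (u x : Multiplicative ℤ) :
    signAction u x = x ^ (u.toAdd.negOnePow : ℤ) :=
  MulAut.zpow_apply_of_apply_eq_inv rfl _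

abbrev Semidirect : Type := Multiplicative ℤ ⋊[signAction] Multiplicative ℤ

def lift {K : Type*} [Group K] (a t : K) (h : t⁻¹ * a * t = a⁻¹) : Semidirect →* K :=
  SemidirectProduct.lift (zpowersHom K a) (zpowersHom K t) fun u => by
    refine MonoidHom.ext_mint ?_
    simp [signAction_apply, ← zpow_mul_mul_zpow_inv_of_inv_mul_mul_eq_inv h, -map_zpow]

theorem inv_inr_mul_inl_mul_inr :
    (inr (.ofAdd 1))⁻¹ * inl (.ofAdd 1) * inr (.ofAdd 1) = (inl (.ofAdd 1) : Semidirect)⁻¹ := by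
  rw [← map_inv, ← inl_aut_inv, ← map_inv, signAction_apply]
  simp

def fromBS : BS 1 (-1) →* Semidirect :=
  PresentedGroup.toGroup (f := ![inl (.ofAdd 1), inr (.ofAdd 1)]) (by
    rintro r rfl
    simpa [mul_eq_one_iff_eq_inv] using inv_inr_mul_inl_mul_inr)

def toBS : Semidirect →* BS 1 (-1) := lift _ _ inv_bst_mul_bsa_mul_bst

theorem toBS_comp_fromBS : toBS.comp fromBS = MonoidHom.id _ := by
  refine PresentedGroup.ext fun i => ?_
  fin_cases i <;> simp [fromBS, toBS, lift, bsa, bst]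

theorem fromBS_injective : Function.Injective fromBS :=
  Function.LeftInverse.injective (g := toBS) (DFunLike.congr_fun toBS_comp_fromBS)

def dyadicSubgroup (n : ℕ) : Subgroup Semidirect where
  carrier := {g | g.right = 1 ∧ 2 ^ n ∣ g.left.toAdd}
  one_mem' := by simp
  mul_mem' := by
    rintro g h ⟨hg, hg'⟩ ⟨hh, hh'⟩
    simpa [hg, hh] using dvd_add hg' hh'
  inv_mem' := by
    rintro g ⟨hg, hg'⟩
    simpa [hg] using hg'

theorem commutatorElement_inl (a : Multiplicative ℤ) (g : Semidirect) :
    ⁅(inl a : Semidirect), g⁆ = inl (a * (signAction g.right a)⁻¹) := by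
  ext <;> simp [commutatorElement_def]; abel

theorem commutatorElement_mem_dyadicSubgroup_succ {n : ℕ} {g : Semidirect}
    (hg : g ∈ dyadicSubgroup n) (x : Semidirect) : ⁅g, x⁆ ∈ dyadicSubgroup (n + 1) := by
  obtain ⟨hright, hleft⟩ := hg
  rw [← inl_left_mul_inr_right g, hright, map_one, mul_one, commutatorElement_inl]
  refine ⟨right_inl _, ?_⟩
  have hsign : (2 : ℤ) ∣ 1 - (x.right.toAdd.negOnePow : ℤ) := by
    rcases Int.units_eq_one_or x.right.toAdd.negOnePow with h | h <;> simp [h]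
  have hleft_eq : (g.left * (signAction x.right g.left)⁻¹).toAdd
      = (1 - (x.right.toAdd.negOnePow : ℤ)) * g.left.toAdd := by
    simp only [signAction_apply, toAdd_mul, toAdd_inv, toAdd_zpow, Int.zsmul_eq_mul]
    ring
  rw [left_inl, hleft_eq, pow_succ']
  exact mul_dvd_mul hsign hleft

theorem lowerCentralSeries_succ_le_dyadicSubgroup (n : ℕ) :
    (⊤ : Subgroup Semidirect).lowerCentralSeries (n + 1) ≤ dyadicSubgroup n := by
  induction n with
  | zero =>
    refine Subgroup.commutator_le.2 fun g _ x _ => ⟨?_, one_dvd _⟩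
    simp [commutatorElement_def]
  | succ n ih =>
    exact Subgroup.commutator_le.2 fun g hg x _ =>
      commutatorElement_mem_dyadicSubgroup_succ (ih hg) x

theorem iInf_lowerCentralSeries_eq_bot :
    ⨅ n, (⊤ : Subgroup Semidirect).lowerCentralSeries n = ⊥ := by
  refine (Subgroup.eq_bot_iff_forall _).2 fun g hg => ?_
  have hK (n : ℕ) : g ∈ dyadicSubgroup n :=
    lowerCentralSeries_succ_le_dyadicSubgroup n (Subgroup.mem_iInf.1 hg (n + 1))
  ext
  · exact Int.eq_zero_of_forall_pow_dvd (by norm_num) fun n => (hK n).2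
  · exact congrArg Multiplicative.toAdd (hK 0).1

end KleinBottle

/-- The Klein bottle group `BS(1,-1)` is residually nilpotent: the intersection of all the
terms of its lower central series is trivial. -/
theorem klein_bottle_residually_nilpotent :
    (⨅ i : ℕ, (⊤ : Subgroup (BS 1 (-1))).lowerCentralSeries i) = ⊥ :=
  Subgroup.iInf_lowerCentralSeries_eq_bot_of_injective KleinBottle.fromBS_injective
    KleinBottle.iInf_lowerCentralSeries_eq_bot
end

section
/- Let G = BS(1,n) with n ≠ 1. For every i > 1, the i-th term of the lower central series γ_iG consists exactly of the elements t^l a^{α(n-1)^{i-1}} t^{-l} with l ∈ ℕ ∪ {0} and α ∈ ℤ. -/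
open Subgroup
open scoped commutatorElement

section Generators

variable {G : Type*} [Group G] {S : Set G} {N : Subgroup G}

theorem Subgroup.normal_of_conj_mem_of_closure_eq_top (hS : closure S = ⊤) {H : Subgroup G}
    (h : ∀ s ∈ S, ∀ x ∈ H, s * x * s⁻¹ ∈ H ∧ s⁻¹ * x * s ∈ H) : H.Normal := by
  refine normalizer_eq_top_iff.mp (top_le_iff.mp (hS ▸ closure_le _ |>.2 fun s hs => ?_))
  refine mem_normalizer_iff.2 fun x => ⟨fun hx => (h s hs x hx).1, fun hx => ?_⟩
  simpa [mul_assoc] using (h s hs _ hx).2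

theorem commutatorElement_mem_iff_commute [N.Normal] {g x : G} :
    ⁅g, x⁆ ∈ N ↔ Commute (g : G ⧸ N) x := by
  rw [← QuotientGroup.eq_one_iff, ← commutatorElement_eq_one_iff_commute]
  rfl

theorem commutatorElement_mem_of_closure_eq_top (hS : closure S = ⊤) [N.Normal] {g : G}
    (h : ∀ s ∈ S, ⁅g, s⁆ ∈ N) (x : G) : ⁅g, x⁆ ∈ N := by
  have hle : closure S ≤ (centralizer {(g : G ⧸ N)}).comap (QuotientGroup.mk' N) :=
    (closure_le _).2 fun s hs =>
      mem_centralizer_singleton_iff.2 (commutatorElement_mem_iff_commute.1 (h s hs)).symm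
  exact commutatorElement_mem_iff_commute.2
    (mem_centralizer_singleton_iff.1 (hle (hS ▸ mem_top x))).symm

theorem Subgroup.commutator_le_of_closure_eq_top (hS : closure S = ⊤) [N.Normal] {H : Subgroup G}
    (h : ∀ g ∈ H, ∀ s ∈ S, ⁅g, s⁆ ∈ N) : ⁅H, ⊤⁆ ≤ N :=
  commutator_le.2 fun g hg x _ => commutatorElement_mem_of_closure_eq_top hS (h g hg) x

end Generators

theorem closure_bsa_bst (m n : ℤ) : closure {bsa m n, bst m n} = ⊤ := by
  rw [← PresentedGroup.closure_range_of (BSrels m n), Set.range, bsa, bst]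
  congr
  ext x
  simp [Fin.exists_fin_two, eq_comm]

namespace BS

variable (n : ℤ)

local notation "a" => bsa 1 n
local notation "t" => bst 1 n

theorem bst_inv_mul_bsa_mul_bst : t⁻¹ * a * t = a ^ n := by
  have h := PresentedGroup.one_of_mem (rels := BSrels 1 n) rfl
  simp only [map_mul, map_inv, map_zpow, zpow_one] at h
  exact mul_inv_eq_one.1 h

theorem bst_inv_mul_bsa_zpow_mul_bst (c : ℤ) : t⁻¹ * a ^ c * t = a ^ (n * c) := by
  simpa only [inv_inv, zpow_mul, bst_inv_mul_bsa_mul_bst] using (@conj_zpow _ _ c t⁻¹ a).symm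

def conjPow (l : ℕ) (c : ℤ) : BS 1 n := t ^ (l : ℤ) * a ^ c * t ^ (-(l : ℤ))

theorem conjPow_zero_left (c : ℤ) : conjPow n 0 c = a ^ c := by
  simp [conjPow]

theorem conjPow_eq_zpow (l : ℕ) (c : ℤ) : conjPow n l c = conjPow n l 1 ^ c := by
  simp only [conjPow, zpow_neg, zpow_one, conj_zpow]

theorem conjPow_add (l : ℕ) (c d : ℤ) : conjPow n l (c + d) = conjPow n l c * conjPow n l d := by
  rw [conjPow_eq_zpow, zpow_add, ← conjPow_eq_zpow, ← conjPow_eq_zpow]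

theorem conjPow_neg (l : ℕ) (c : ℤ) : conjPow n l (-c) = (conjPow n l c)⁻¹ := by
  rw [conjPow_eq_zpow, zpow_neg, ← conjPow_eq_zpow]

theorem bst_mul_conjPow_mul_bst_inv (l : ℕ) (c : ℤ) :
    t * conjPow n l c * t⁻¹ = conjPow n (l + 1) c := by
  simp only [conjPow]
  push_cast
  group

theorem bst_inv_mul_conjPow_mul_bst (l : ℕ) (c : ℤ) :
    t⁻¹ * conjPow n l c * t = conjPow n l (n * c) := by
  rw [conjPow, conjPow, ← bst_inv_mul_bsa_zpow_mul_bst]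
  group

theorem conjPow_succ_mul (l : ℕ) (c : ℤ) : conjPow n (l + 1) (n * c) = conjPow n l c := by
  rw [← bst_mul_conjPow_mul_bst_inv, ← bst_inv_mul_conjPow_mul_bst]
  group

theorem conjPow_add_pow_mul (l k : ℕ) (c : ℤ) : conjPow n (l + k) (n ^ k * c) = conjPow n l c := by
  induction k with
  | zero => simp
  | succ k ih => rw [← add_assoc, pow_succ', mul_assoc, conjPow_succ_mul, ih]

theorem commute_bsa_conjPow (l : ℕ) (c : ℤ) : Commute a (conjPow n l c) := by
  have ha : conjPow n l (n ^ l) = a := by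
    simpa [conjPow_zero_left] using conjPow_add_pow_mul n 0 l 1
  rw [← ha, conjPow_eq_zpow, conjPow_eq_zpow n l c]
  exact Commute.zpow_zpow_self _ _ _

theorem commutatorElement_conjPow_bst (l : ℕ) (c : ℤ) :
    ⁅conjPow n l c, t⁆ = conjPow n (l + 1) ((n - 1) * c) := by
  rw [commutatorElement_def, mul_assoc, mul_assoc, ← mul_assoc t, ← conjPow_neg,
    bst_mul_conjPow_mul_bst_inv, ← conjPow_succ_mul, ← conjPow_add]
  ring_nf

theorem commutatorElement_bst_inv_bsa_zpow (c : ℤ) : ⁅t⁻¹, a ^ c⁆ = a ^ ((n - 1) * c) := by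
  rw [commutatorElement_def, inv_inv, bst_inv_mul_bsa_zpow_mul_bst, ← zpow_neg, ← zpow_add]
  ring_nf

def multiplesSubgroup (c : ℤ) : Subgroup (BS 1 n) where
  carrier := {x | ∃ (l : ℕ) (α : ℤ), x = conjPow n l (α * c)}
  one_mem' := ⟨0, 0, by rw [zero_mul, conjPow_zero_left, zpow_zero]⟩
  mul_mem' := by
    rintro _ _ ⟨l₁, α₁, rfl⟩ ⟨l₂, α₂, rfl⟩
    refine ⟨l₁ + l₂, n ^ l₂ * α₁ + n ^ l₁ * α₂, ?_⟩
    rw [← conjPow_add_pow_mul n l₁ l₂, ← conjPow_add_pow_mul n l₂ l₁, add_comm l₂,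
      ← conjPow_add]
    ring_nf
  inv_mem' := by
    rintro _ ⟨l, α, rfl⟩
    exact ⟨l, -α, by rw [← conjPow_neg, neg_mul]⟩

variable {n}

theorem mem_multiplesSubgroup {c : ℤ} {x : BS 1 n} :
    x ∈ multiplesSubgroup n c ↔ ∃ (l : ℕ) (α : ℤ), x = conjPow n l (α * c) :=
  Iff.rfl

instance (c : ℤ) : (multiplesSubgroup n c).Normal := by
  refine normal_of_conj_mem_of_closure_eq_top (closure_bsa_bst 1 n) ?_
  rintro s (rfl | rfl) _ ⟨l, α, rfl⟩
  · rw [(commute_bsa_conjPow n l _).eq, (commute_bsa_conjPow n l _).inv_left.eq,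
      mul_inv_cancel_right, inv_mul_cancel_right]
    exact ⟨⟨l, α, rfl⟩, ⟨l, α, rfl⟩⟩
  · rw [bst_mul_conjPow_mul_bst_inv, bst_inv_mul_conjPow_mul_bst, ← mul_assoc, mul_comm n]
    exact ⟨⟨l + 1, α, rfl⟩, ⟨l, α * n, rfl⟩⟩

theorem multiplesSubgroup_le_of_zpow_mem {c : ℤ} {N : Subgroup (BS 1 n)} [N.Normal]
    (h : a ^ c ∈ N) : multiplesSubgroup n c ≤ N := by
  rintro _ ⟨l, α, rfl⟩
  rw [conjPow, mul_comm, zpow_mul, zpow_neg]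
  exact Normal.conj_mem ‹_› _ (zpow_mem h α) _

theorem commutator_multiplesSubgroup_top_le (c : ℤ) :
    ⁅multiplesSubgroup n c, ⊤⁆ ≤ multiplesSubgroup n ((n - 1) * c) := by
  refine commutator_le_of_closure_eq_top (closure_bsa_bst 1 n) ?_
  rintro _ ⟨l, α, rfl⟩ s (rfl | rfl)
  · rw [commutatorElement_eq_one_iff_commute.2 (commute_bsa_conjPow n l _).symm]
    exact one_mem _
  · rw [commutatorElement_conjPow_bst, mul_left_comm]
    exact ⟨l + 1, α, rfl⟩

theorem bsa_mem_multiplesSubgroup_one : a ∈ multiplesSubgroup n 1 :=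
  ⟨0, 1, by rw [mul_one, conjPow_zero_left, zpow_one]⟩

theorem commutator_top_top_le_multiplesSubgroup :
    ⁅(⊤ : Subgroup (BS 1 n)), ⊤⁆ ≤ multiplesSubgroup n (n - 1) := by
  refine commutator_le_of_closure_eq_top (closure_bsa_bst 1 n) fun g _ s hs => ?_
  rw [← inv_mem_iff, commutatorElement_inv]
  refine commutatorElement_mem_of_closure_eq_top (closure_bsa_bst 1 n) (fun s' hs' => ?_) g
  have hat : ⁅a, t⁆ ∈ multiplesSubgroup n (n - 1) := mul_one (n - 1) ▸
    commutator_multiplesSubgroup_top_le 1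
      (commutator_mem_commutator bsa_mem_multiplesSubgroup_one (mem_top t))
  rcases hs with rfl | rfl <;> rcases hs' with rfl | rfl
  · rw [commutatorElement_self]; exact one_mem _
  · exact hat
  · rw [← commutatorElement_inv]; exact inv_mem hat
  · rw [commutatorElement_self]; exact one_mem _

theorem lowerCentralSeries_le_multiplesSubgroup {j : ℕ} (hj : 1 ≤ j) :
    (⊤ : Subgroup (BS 1 n)).lowerCentralSeries j ≤ multiplesSubgroup n ((n - 1) ^ j) := by
  induction j, hj using Nat.le_induction with
  | base => simpa using commutator_top_top_le_multiplesSubgroup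
  | succ j _ ih =>
    rw [Subgroup.lowerCentralSeries_succ, pow_succ']
    exact (commutator_mono ih le_rfl).trans (commutator_multiplesSubgroup_top_le _)

theorem bsa_zpow_mem_lowerCentralSeries (j : ℕ) :
    a ^ ((n - 1) ^ j) ∈ (⊤ : Subgroup (BS 1 n)).lowerCentralSeries j := by
  induction j with
  | zero => exact mem_top _
  | succ j ih =>
    rw [Subgroup.lowerCentralSeries_succ, commutator_comm, pow_succ',
      ← commutatorElement_bst_inv_bsa_zpow]
    exact commutator_mem_commutator (mem_top _) ih

end BS

/-- Mathlib indexes from `0`: `lowerCentralSeries j` is `γ_(j+1)`. -/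
theorem bs_one_n_lowerCentralSeries_mem_general (n : ℤ)
    (j : ℕ) (hj : 1 ≤ j) (x : BS 1 n) :
    x ∈ (⊤ : Subgroup (BS 1 n)).lowerCentralSeries j ↔
      ∃ (l : ℕ) (α : ℤ),
        x = bst 1 n ^ (l : ℤ) * bsa 1 n ^ (α * (n - 1) ^ j) * bst 1 n ^ (-(l : ℤ)) := by
  have h : (⊤ : Subgroup (BS 1 n)).lowerCentralSeries j = BS.multiplesSubgroup n ((n - 1) ^ j) :=
    (BS.lowerCentralSeries_le_multiplesSubgroup hj).antisymm
      (BS.multiplesSubgroup_le_of_zpow_mem (BS.bsa_zpow_mem_lowerCentralSeries j))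
  simp only [h, BS.mem_multiplesSubgroup, BS.conjPow]

/-- Let `G = BS(1,n)` with `n ≠ 1` (and `n ≠ 0`). For every `i > 1` (written `i = j + 1`
with `j ≥ 1`; note `γ_{j+1} G = lowerCentralSeries G j` in Mathlib's 0-based indexing),
the term `γ_{j+1} G` consists exactly of the elements `t^l * a^(α * (n-1)^j) * t^(-l)`
with `l ∈ ℕ` and `α ∈ ℤ`. -/
theorem bs_one_n_lowerCentralSeries_mem (n : ℤ) (hn0 : n ≠ 0) (hn1 : n ≠ 1)
    (j : ℕ) (hj : 1 ≤ j) (x : BS 1 n) :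
    x ∈ (⊤ : Subgroup (BS 1 n)).lowerCentralSeries j ↔
      ∃ (l : ℕ) (α : ℤ),
        x = bst 1 n ^ (l : ℤ) * bsa 1 n ^ (α * (n - 1) ^ j) * bst 1 n ^ (-(l : ℤ)) :=
  bs_one_n_lowerCentralSeries_mem_general n j hj x
end

section
/- For m > 1, the natural surjection BS(m,m) → ℤ * ℤ/mℤ sending a^m to 1 induces isomorphisms γ_i(BS(m,m)) ≅ γ_i(ℤ * ℤ/mℤ) for all i > 1. -/
/-- The relation \`a^m = 1\` defining the free product \`ℤ * ℤ/mℤ = ⟨a, t ∣ aᵐ⟩\`. -/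
def FPrels (m : ℤ) : Set (FreeGroup (Fin 2)) := {(FreeGroup.of 0) ^ m}

/-- The free product \`ℤ * ℤ/mℤ\`, presented as \`⟨a, t ∣ aᵐ = 1⟩\`. -/
abbrev FP (m : ℤ) : Type := PresentedGroup (FPrels m)

/-- The generator \`a\` (of order \`m\`) of \`ℤ * ℤ/mℤ\`. -/
def fpa (m : ℤ) : FP m := PresentedGroup.of 0

/-- The generator \`t\` (of infinite order) of \`ℤ * ℤ/mℤ\`. -/
def fpt (m : ℤ) : FP m := PresentedGroup.of 1

/-! The kernel of `BS(m,m) → ℤ * ℤ/mℤ` is the normal closure of `aᵐ`. The relation says that `t`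
commutes with `aᵐ`, so `aᵐ` is central and the kernel is just the cyclic group `⟨aᵐ⟩`. The exponent
sum of `a` is a homomorphism `BS(m,m) → ℤ` sending `(aᵐ)ᵏ` to `mk`, so `⟨aᵐ⟩` meets the commutator
subgroup `γ₂` trivially, and the map is injective on every `γᵢ ≤ γ₂`. It maps `γᵢ` onto `γᵢ`
simply because it is surjective. -/

namespace Subgroup

variable {G : Type*} [Group G]

theorem normal_of_le_center {H : Subgroup G} (h : H ≤ center G) : H.Normal :=
  ⟨fun n hn g => by rwa [mem_center_iff.mp (h hn) g, mul_inv_cancel_right]⟩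

theorem normalClosure_singleton_eq_zpowers {z : G} (hz : z ∈ center G) :
    normalClosure {z} = zpowers z :=
  haveI := normal_of_le_center ((zpowers_le (H := center G)).mpr hz)
  le_antisymm (normalClosure_le_normal (Set.singleton_subset_iff.mpr (mem_zpowers z)))
    (zpowers_le.mpr (subset_normalClosure rfl))

theorem disjoint_zpowers_commutator {A : Type*} [CommGroup A] (ψ : G →* A) {z : G}
    (hz : ∀ k : ℤ, ψ z ^ k = 1 → z ^ k = 1) : Disjoint (zpowers z) (_root_.commutator G) := by
  rw [disjoint_def]
  rintro _ ⟨k, rfl⟩ hk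
  exact hz k (by simpa using Abelianization.commutator_subset_ker ψ hk)

end Subgroup

theorem MonoidHom.injOn_of_disjoint_ker {G H : Type*} [Group G] [Group H] (f : G →* H)
    {K : Subgroup G} (h : Disjoint f.ker K) : Set.InjOn f K :=
  (Set.injOn_iff_map_eq_one f K).mpr fun _ hx hfx => (Subgroup.disjoint_def.mp h) hfx hx

namespace PresentedGroup

variable {α : Type*} {rels rels' : Set (FreeGroup α)}

theorem mem_center_of_forall_commute {z : PresentedGroup rels} (h : ∀ x, Commute z (of x)) :
    z ∈ Subgroup.center (PresentedGroup rels) := by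
  have hgen : Subgroup.closure (Set.range of) ≤ Subgroup.centralizer {z} :=
    (Subgroup.closure_le _).mpr <| by
      rintro _ ⟨x, rfl⟩
      exact Subgroup.mem_centralizer_singleton_iff.mpr (h x).symm
  rw [closure_range_of, top_le_iff] at hgen
  exact Subgroup.centralizer_eq_top_iff_subset.mp hgen rfl

theorem comp_mk_of_forall_of {f : PresentedGroup rels →* PresentedGroup rels'}
    (hf : ∀ x, f (of x) = of x) : f.comp (mk rels) = mk rels' :=
  FreeGroup.ext_hom _ _ hf

theorem ker_eq_normalClosure_of_forall_of {f : PresentedGroup rels →* PresentedGroup rels'}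
    (hf : ∀ x, f (of x) = of x) : f.ker = Subgroup.normalClosure (mk rels '' rels') := by
  calc f.ker = ((f.comp (mk rels)).ker).map (mk rels) := by
        rw [← MonoidHom.comap_ker, Subgroup.map_comap_eq_self_of_surjective (mk_surjective rels)]
    _ = (Subgroup.normalClosure rels').map (mk rels) := by
        rw [comp_mk_of_forall_of hf]; exact congrArg _ (QuotientGroup.ker_mk' _)
    _ = Subgroup.normalClosure (mk rels '' rels') :=
        Subgroup.map_normalClosure _ _ (mk_surjective rels)

end PresentedGroup

theorem bst_inv_mul_bsa_zpow_mul_bst (m n : ℤ) :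
    (bst m n)⁻¹ * bsa m n ^ m * bst m n = bsa m n ^ n := by
  have hrel := PresentedGroup.one_of_mem (rels := BSrels m n) rfl
  simp only [map_mul, map_inv, map_zpow] at hrel
  exact mul_inv_eq_one.mp hrel

theorem bsa_zpow_mem_center (m : ℤ) : bsa m m ^ m ∈ Subgroup.center (BS m m) := by
  refine PresentedGroup.mem_center_of_forall_commute (Fin.forall_fin_two.mpr ⟨?_, ?_⟩)
  · exact (Commute.refl (bsa m m)).zpow_left m
  · have hrel := bst_inv_mul_bsa_zpow_mul_bst m m
    rw [mul_assoc, inv_mul_eq_iff_eq_mul] at hrel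
    exact hrel

theorem fpa_zpow (m : ℤ) : fpa m ^ m = 1 := by
  rw [fpa, PresentedGroup.of, ← map_zpow]
  exact PresentedGroup.one_of_mem rfl

def bsToFP (m : ℤ) : BS m m →* FP m :=
  PresentedGroup.toGroup (f := PresentedGroup.of) <| by
    rintro _ rfl
    simp only [map_mul, map_inv, map_zpow, FreeGroup.lift_apply_of]
    rw [← fpa, fpa_zpow]
    group

theorem bsToFP_of (m : ℤ) (x : Fin 2) : bsToFP m (PresentedGroup.of x) = PresentedGroup.of x :=
  PresentedGroup.toGroup.of _

theorem bsToFP_surjective (m : ℤ) : Function.Surjective (bsToFP m) := by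
  refine Function.Surjective.of_comp (g := PresentedGroup.mk (BSrels m m)) ?_
  rw [← MonoidHom.coe_comp, PresentedGroup.comp_mk_of_forall_of (bsToFP_of m)]
  exact PresentedGroup.mk_surjective _

theorem ker_bsToFP (m : ℤ) : (bsToFP m).ker = Subgroup.zpowers (bsa m m ^ m) := by
  rw [PresentedGroup.ker_eq_normalClosure_of_forall_of (bsToFP_of m), FPrels,
    Set.image_singleton, map_zpow]
  exact Subgroup.normalClosure_singleton_eq_zpowers (bsa_zpow_mem_center m)

def bsExpSumA (m : ℤ) : BS m m →* Multiplicative ℤ :=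
  PresentedGroup.toGroup (f := ![Multiplicative.ofAdd 1, 1]) <| by
    rintro _ rfl
    simp

theorem disjoint_zpowers_bsa_zpow_commutator (m : ℤ) :
    Disjoint (Subgroup.zpowers (bsa m m ^ m)) (commutator (BS m m)) := by
  refine Subgroup.disjoint_zpowers_commutator (bsExpSumA m) fun k hk => ?_
  have hexp : m * k = 0 := by
    simpa [bsExpSumA, bsa, ← zpow_mul] using hk
  rw [← zpow_mul, hexp, zpow_zero]

theorem bs_m_m_lcs_iso_general (m : ℤ) :
    ∃ φ : BS m m →* FP m,
      φ (bsa m m) = fpa m ∧ φ (bst m m) = fpt m ∧ Function.Surjective φ ∧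
      ∀ j : ℕ, 1 ≤ j →
        ((⊤ : Subgroup (BS m m)).lowerCentralSeries j).map φ = (⊤ : Subgroup (FP m)).lowerCentralSeries j ∧
        Set.InjOn φ ((⊤ : Subgroup (BS m m)).lowerCentralSeries j) := by
  refine ⟨bsToFP m, bsToFP_of m 0, bsToFP_of m 1, bsToFP_surjective m, fun j hj => ⟨?_, ?_⟩⟩
  · rw [Subgroup.map_lowerCentralSeries, Subgroup.map_top_of_surjective _ (bsToFP_surjective m)]
  · refine (bsToFP m).injOn_of_disjoint_ker ?_
    rw [ker_bsToFP]
    exact (disjoint_zpowers_bsa_zpow_commutator m).mono_right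
      (Subgroup.lowerCentralSeries_antitone _ hj)

/-- For `m > 1`, the natural surjection `BS(m,m) → ℤ * ℤ/mℤ` (sending `a ↦ a`, `t ↦ t`,
and thus killing `aᵐ`) induces isomorphisms `γ_i(BS(m,m)) ≅ γ_i(ℤ * ℤ/mℤ)` for all
`i > 1` (i.e. `lowerCentralSeries` indices `j ≥ 1`): it maps `γ_i` onto `γ_i` and is
injective on `γ_i`. -/
theorem bs_m_m_lcs_iso (m : ℤ) (hm : 1 < m) :
    ∃ φ : BS m m →* FP m,
      φ (bsa m m) = fpa m ∧ φ (bst m m) = fpt m ∧ Function.Surjective φ ∧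
      ∀ j : ℕ, 1 ≤ j →
        ((⊤ : Subgroup (BS m m)).lowerCentralSeries j).map φ = (⊤ : Subgroup (FP m)).lowerCentralSeries j ∧
        Set.InjOn φ ((⊤ : Subgroup (BS m m)).lowerCentralSeries j) :=
  bs_m_m_lcs_iso_general m
end

section
/- A Baumslag-Solitar group BS(m,n) is torsion-free residually nilpotent (i.e., residually (torsion-free nilpotent)) if and only if m = n = 1, that is, if and only if BS(m,n) ≅ ℤ × ℤ. -/
/-- A group is residually (torsion-free nilpotent) if every nontrivial element survives
in some torsion-free nilpotent quotient. -/
def IsResiduallyTorsionFreeNilpotent (G : Type*) [Group G] : Prop :=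
  ∀ g : G, g ≠ 1 → ∃ (N : Subgroup G) (_ : N.Normal),
    g ∉ N ∧ Group.IsNilpotent (G ⧸ N) ∧ (∀ x : G ⧸ N, x ≠ 1 → ¬IsOfFinOrder x)

/-!
In a torsion-free nilpotent group the upper central factors are torsion-free (an induction using
`⁅xᵏ, y⁆ ≡ ⁅x, y⁆ᵏ` one level down), so `xᵏ` central forces `x` central; inducting on the
nilpotency class through `G ⧸ center G`, a relation `t⁻¹ xᵐ t = xⁿ` with `m ≠ n` forces `x = 1`.
So for `m ≠ n` the generator `a`, nontrivial in `BS(m,n)` because of the affine action on `ℚ`,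
dies in every torsion-free nilpotent quotient. For `m = n > 1`, `aᵐ` commutes with `t`, hence so
does `a` in every such quotient, while `⁅a, t⁆ ≠ 1` in the Heisenberg group mod `m`.
Finally `BS(1,1) ≅ ℤ²`, which is torsion-free abelian.
-/

open scoped commutatorElement

theorem commutatorElement_pow_left {G : Type*} [Group G] {x y : G} (h : Commute ⁅x, y⁆ x)
    (k : ℕ) : ⁅x ^ k, y⁆ = ⁅x, y⁆ ^ k := by
  induction k with
  | zero => simp
  | succ k ih =>
    calc ⁅x ^ (k + 1), y⁆ = x * ⁅x ^ k, y⁆ * x⁻¹ * ⁅x, y⁆ := by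
          simp only [commutatorElement_def, pow_succ']; group
      _ = ⁅x, y⁆ ^ (k + 1) := by rw [ih, ← (h.pow_left k).eq, mul_inv_cancel_right, pow_succ]

theorem commutatorElement_pow_mem_upperCentralSeries_iff {G : Type*} [Group G] {i : ℕ} {x : G}
    (hx : x ∈ Subgroup.upperCentralSeries G (i + 2)) (y : G) (k : ℕ) :
    ⁅x, y⁆ ^ k ∈ Subgroup.upperCentralSeries G i ↔
      ⁅x ^ k, y⁆ ∈ Subgroup.upperCentralSeries G i := by
  let π := QuotientGroup.mk' (Subgroup.upperCentralSeries G i)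
  have hcomm : Commute ⁅π x, π y⁆ (π x) := by
    rw [← commutatorElement_eq_one_iff_commute, ← map_commutatorElement, ← map_commutatorElement,
      QuotientGroup.mk'_apply, QuotientGroup.eq_one_iff]
    exact Subgroup.mem_upperCentralSeries_succ_iff.mp
      (Subgroup.mem_upperCentralSeries_succ_iff.mp hx y) x
  rw [← QuotientGroup.eq_one_iff, ← QuotientGroup.eq_one_iff, ← QuotientGroup.mk'_apply,
    ← QuotientGroup.mk'_apply, map_pow, map_commutatorElement, map_commutatorElement, map_pow,
    commutatorElement_pow_left hcomm]

/-- Torsion-freeness in the sense of `IsResiduallyTorsionFreeNilpotent`. For non-commutative groups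
this is weaker than `IsMulTorsionFree`, which asks for unique roots. -/
def Monoid.IsTorsionFree (G : Type*) [Monoid G] : Prop :=
  ∀ g : G, g ≠ 1 → ¬IsOfFinOrder g

namespace Monoid.IsTorsionFree

variable {G H : Type*} [Group G] [Group H]

theorem of_isMulTorsionFree [IsMulTorsionFree G] : IsTorsionFree G :=
  fun _ hg hfin => hg hfin.eq_one'

theorem of_injective {f : G →* H} (hf : Function.Injective f) (hH : IsTorsionFree H) :
    IsTorsionFree G :=
  fun g hg hfin => hH (f g) ((map_ne_one_iff f hf).mpr hg) (f.isOfFinOrder hfin)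

theorem eq_one_of_pow_eq_one (hG : IsTorsionFree G) {x : G} {k : ℕ} (hk : k ≠ 0)
    (h : x ^ k = 1) : x = 1 :=
  by_contra fun hx => hG x hx (isOfFinOrder_iff_pow_eq_one.mpr ⟨k, Nat.pos_of_ne_zero hk, h⟩)

theorem eq_one_of_zpow_eq_one (hG : IsTorsionFree G) {x : G} {k : ℤ} (hk : k ≠ 0)
    (h : x ^ k = 1) : x = 1 :=
  by_contra fun hx => hG x hx (isOfFinOrder_iff_zpow_eq_one.mpr ⟨k, hk, h⟩)

theorem mem_upperCentralSeries_of_pow_mem (hG : IsTorsionFree G) {k : ℕ} (hk : k ≠ 0) :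
    ∀ {i : ℕ} {x : G}, x ∈ Subgroup.upperCentralSeries G (i + 1) →
      x ^ k ∈ Subgroup.upperCentralSeries G i → x ∈ Subgroup.upperCentralSeries G i
  | 0, x, _, hxk => by
    rw [Subgroup.upperCentralSeries_zero, Subgroup.mem_bot] at hxk ⊢
    exact hG.eq_one_of_pow_eq_one hk hxk
  | i + 1, x, hx, hxk => Subgroup.mem_upperCentralSeries_succ_iff.mpr fun y =>
    hG.mem_upperCentralSeries_of_pow_mem hk (Subgroup.mem_upperCentralSeries_succ_iff.mp hx y)
      ((commutatorElement_pow_mem_upperCentralSeries_iff hx y k).mpr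
        (Subgroup.mem_upperCentralSeries_succ_iff.mp hxk y))

theorem mem_center_of_pow_mem_center [Group.IsNilpotent G] (hG : IsTorsionFree G) {x : G}
    {k : ℕ} (hk : k ≠ 0) (h : x ^ k ∈ Subgroup.center G) : x ∈ Subgroup.center G := by
  rw [← Subgroup.upperCentralSeries_one] at h ⊢
  have descend : ∀ j, x ∈ Subgroup.upperCentralSeries G (j + 1) →
      x ∈ Subgroup.upperCentralSeries G 1 := by
    intro j
    induction j with
    | zero => exact id
    | succ j ih =>
      exact fun hx => ih (hG.mem_upperCentralSeries_of_pow_mem hk hx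
        (Subgroup.upperCentralSeries_mono G (by omega) h))
  obtain ⟨c, hc⟩ := Group.IsNilpotent.nilpotent G
  exact descend c (Subgroup.upperCentralSeries_mono G c.le_succ (hc ▸ Subgroup.mem_top x))

theorem commute_of_pow_commute [Group.IsNilpotent G] (hG : IsTorsionFree G) {x y : G} {k : ℕ}
    (hk : k ≠ 0) (h : Commute (x ^ k) y) : Commute x y := by
  let K := Subgroup.closure {x, y}
  have hxK : x ∈ K := Subgroup.subset_closure (by simp)
  have hyK : y ∈ K := Subgroup.subset_closure (by simp)
  have hK : K ≤ Subgroup.centralizer {x ^ k} := by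
    rw [Subgroup.closure_le, Set.insert_subset_iff, Set.singleton_subset_iff]
    simp only [SetLike.mem_coe, Subgroup.mem_centralizer_singleton_iff]
    exact ⟨((Commute.refl x).pow_left k).eq.symm, h.eq.symm⟩
  have hcenter : (⟨x, hxK⟩ : K) ^ k ∈ Subgroup.center K := by
    rw [Subgroup.mem_center_iff]
    intro g
    exact Subtype.ext (Subgroup.mem_centralizer_singleton_iff.mp (hK g.2))
  have hxcenter := (hG.of_injective K.subtype_injective).mem_center_of_pow_mem_center hk hcenter
  exact congrArg Subtype.val (Subgroup.mem_center_iff.mp hxcenter ⟨y, hyK⟩) |>.symm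

theorem quotient_center [Group.IsNilpotent G] (hG : IsTorsionFree G) :
    IsTorsionFree (G ⧸ Subgroup.center G) := by
  intro q hq hfin
  obtain ⟨g, rfl⟩ := QuotientGroup.mk_surjective q
  obtain ⟨k, hk, hgk⟩ := isOfFinOrder_iff_pow_eq_one.mp hfin
  rw [← QuotientGroup.mk_pow, QuotientGroup.eq_one_iff] at hgk
  exact hq ((QuotientGroup.eq_one_iff g).mpr (hG.mem_center_of_pow_mem_center hk.ne' hgk))

theorem eq_one_of_conj_zpow_eq_zpow [Group.IsNilpotent G] (hG : IsTorsionFree G) {m n : ℤ}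
    (hmn : m ≠ n) {x t : G} (h : t⁻¹ * x ^ m * t = x ^ n) : x = 1 := by
  revert hG x t
  refine Group.nilpotent_center_quotient_ind (P := fun G _ _ =>
    IsTorsionFree G → ∀ {x t : G}, t⁻¹ * x ^ m * t = x ^ n → x = 1) G ?_ ?_
  · exact fun _ _ _ _ _ _ _ => Subsingleton.elim _ _
  · intro G _ _ ih hG x t h
    have hx : x ∈ Subgroup.center G := by
      refine (QuotientGroup.eq_one_iff x).mp (ih hG.quotient_center (t := (t : G ⧸ _)) ?_)
      exact_mod_cast congrArg ((↑) : G → G ⧸ Subgroup.center G) h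
    have hxm : x ^ m = x ^ n := by
      rw [← h, mul_assoc, ← (Subgroup.mem_center_iff.mp (Subgroup.zpow_mem _ hx m) t),
        inv_mul_cancel_left]
    exact hG.eq_one_of_zpow_eq_one (sub_ne_zero.mpr hmn) (by rw [zpow_sub, hxm, mul_inv_cancel])

end Monoid.IsTorsionFree

namespace IsResiduallyTorsionFreeNilpotent

variable {G : Type*} [Group G]

theorem of_torsionFree [Group.IsNilpotent G] (hG : Monoid.IsTorsionFree G) :
    IsResiduallyTorsionFreeNilpotent G := fun g hg =>
  ⟨⊥, inferInstance, by rwa [Subgroup.mem_bot],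
    Group.nilpotent_of_surjective _ (QuotientGroup.mk'_surjective ⊥),
    hG.of_injective (f := QuotientGroup.quotientBot.toMonoidHom)
      QuotientGroup.quotientBot.injective⟩

theorem of_mulEquiv {H : Type*} [CommGroup H] [IsMulTorsionFree H] (e : G ≃* H) :
    IsResiduallyTorsionFreeNilpotent G :=
  have := Group.nilpotent_of_surjective e.symm.toMonoidHom e.symm.surjective
  of_torsionFree
    (Monoid.IsTorsionFree.of_isMulTorsionFree.of_injective (f := e.toMonoidHom) e.injective)

theorem eq_one_of_forall_quotient (hG : IsResiduallyTorsionFreeNilpotent G) {g : G}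
    (h : ∀ (N : Subgroup G) [N.Normal] [Group.IsNilpotent (G ⧸ N)],
      Monoid.IsTorsionFree (G ⧸ N) → (g : G ⧸ N) = 1) : g = 1 := by
  by_contra hg
  obtain ⟨N, _, hgN, _, hTF⟩ := hG g hg
  exact hgN ((QuotientGroup.eq_one_iff g).mp (h N hTF))

theorem eq_one_of_conj_zpow_eq_zpow (hG : IsResiduallyTorsionFreeNilpotent G) {m n : ℤ}
    (hmn : m ≠ n) {x t : G} (h : t⁻¹ * x ^ m * t = x ^ n) : x = 1 :=
  hG.eq_one_of_forall_quotient fun N _ _ hTF => hTF.eq_one_of_conj_zpow_eq_zpow hmn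
    (t := (t : G ⧸ N)) (by exact_mod_cast congrArg ((↑) : G → G ⧸ N) h)

theorem commute_of_pow_commute (hG : IsResiduallyTorsionFreeNilpotent G) {x y : G} {k : ℕ}
    (hk : k ≠ 0) (h : Commute (x ^ k) y) : Commute x y := by
  rw [← commutatorElement_eq_one_iff_commute]
  refine hG.eq_one_of_forall_quotient fun N _ _ hTF => ?_
  rw [← QuotientGroup.mk'_apply, map_commutatorElement, commutatorElement_eq_one_iff_commute]
  exact hTF.commute_of_pow_commute hk (by simpa using h.map (QuotientGroup.mk' N))

end IsResiduallyTorsionFreeNilpotent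

namespace BS

variable {m n : ℤ}

theorem conj_bsa_zpow (m n : ℤ) : (bst m n)⁻¹ * bsa m n ^ m * bst m n = bsa m n ^ n := by
  have h := PresentedGroup.one_of_mem (Set.mem_singleton
    ((FreeGroup.of 1)⁻¹ * (FreeGroup.of 0) ^ m * (FreeGroup.of 1) * ((FreeGroup.of 0) ^ n)⁻¹ :
      FreeGroup (Fin 2)))
  simp only [map_mul, map_inv, map_zpow] at h
  exact mul_inv_eq_one.mp h

theorem commute_bsa_zpow_bst (m : ℤ) : Commute (bsa m m ^ m) (bst m m) :=
  inv_mul_eq_iff_eq_mul.mp (by rw [← mul_assoc, conj_bsa_zpow])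

def lift {G : Type*} [Group G] (A T : G) (h : T⁻¹ * A ^ m * T = A ^ n) : BS m n →* G :=
  PresentedGroup.toGroup (f := ![A, T]) (by rintro _ rfl; simp [h])

@[simp]
theorem lift_bsa {G : Type*} [Group G] (A T : G) (h : T⁻¹ * A ^ m * T = A ^ n) :
    lift A T h (bsa m n) = A :=
  PresentedGroup.toGroup.of _

@[simp]
theorem lift_bst {G : Type*} [Group G] (A T : G) (h : T⁻¹ * A ^ m * T = A ^ n) :
    lift A T h (bst m n) = T :=
  PresentedGroup.toGroup.of _


theorem bsa_ne_one (hm : m ≠ 0) (hn : n ≠ 0) : bsa m n ≠ 1 := by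
  have hmn : (m / n : ℚ) ≠ 0 := div_ne_zero (by exact_mod_cast hm) (by exact_mod_cast hn)
  have hrel : (Equiv.mulLeft₀ _ hmn)⁻¹ * Equiv.addLeft (1 : ℚ) ^ m * Equiv.mulLeft₀ _ hmn =
      Equiv.addLeft (1 : ℚ) ^ n := by
    ext x
    simp only [Equiv.zsmul_addLeft, zsmul_eq_mul, mul_one, Equiv.Perm.mul_apply,
      Equiv.mulLeft₀_apply, Equiv.coe_addLeft, Equiv.Perm.coe_inv, Equiv.mulLeft₀_symm_apply,
      inv_div]
    field_simp
  intro h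
  have := congrArg (fun g => lift _ _ hrel g 0) h
  simp at this

theorem commutatorElement_bsa_bst_ne_one {m : ℕ} (hm : 1 < m) :
    ⁅bsa m m, bst m m⁆ ≠ 1 := by
  have : Fact (1 < m) := ⟨hm⟩
  -- the Heisenberg group mod `m`, acting on `(ZMod m)²`
  let A : Equiv.Perm (ZMod m × ZMod m) := Equiv.addRight (1, 0)
  let T : Equiv.Perm (ZMod m × ZMod m) := Equiv.prodShear (Equiv.refl _) Equiv.addLeft
  have hA : A ^ (m : ℤ) = 1 := by
    simp [A, Prod.mk_zero_zero]
  intro h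
  have := congrArg (fun g => lift A T (by rw [hA, mul_one, inv_mul_cancel]) g (0, 0)) h
  simp [A, T, commutatorElement_def] at this


theorem commute_bsa_bst_one : Commute (bsa 1 1) (bst 1 1) := by
  simpa using commute_bsa_zpow_bst 1

def oneOneToIntProd : BS 1 1 →* Multiplicative (ℤ × ℤ) :=
  lift (.ofAdd (1, 0)) (.ofAdd (0, 1)) (inv_mul_cancel_comm _ _)

def intProdToOneOne : Multiplicative (ℤ × ℤ) →* BS 1 1 :=
  ((zpowersHom _ (bsa 1 1)).noncommCoprod (zpowersHom _ (bst 1 1))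
    fun p q => commute_bsa_bst_one.zpow_zpow p.toAdd q.toAdd).comp
      (MulEquiv.prodMultiplicative ℤ ℤ).toMonoidHom

theorem intProdToOneOne_ofAdd (p q : ℤ) :
    intProdToOneOne (.ofAdd (p, q)) = bsa 1 1 ^ p * bst 1 1 ^ q :=
  rfl

def oneOneMulEquiv : BS 1 1 ≃* Multiplicative (ℤ × ℤ) :=
  MonoidHom.toMulEquiv oneOneToIntProd intProdToOneOne
    (PresentedGroup.ext fun i => by
      fin_cases i
      · exact (intProdToOneOne_ofAdd 1 0).trans (by simp [bsa, bst])
      · exact (intProdToOneOne_ofAdd 0 1).trans (by simp [bsa, bst]))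
    (MonoidHom.ext fun ⟨p, q⟩ => by
      change oneOneToIntProd (intProdToOneOne (.ofAdd (p, q))) = .ofAdd (p, q)
      simp [intProdToOneOne_ofAdd, oneOneToIntProd, ← ofAdd_zsmul, ← ofAdd_add])

end BS

/-- A Baumslag-Solitar group `BS(m,n)` with `0 < m ≤ |n|` is residually
(torsion-free nilpotent) if and only if `m = n = 1`, that is, if and only if
`BS(m,n) ≅ ℤ × ℤ`. -/
theorem bs_residually_torsion_free_nilpotent_iff (m n : ℤ) (hm : 0 < m) (hmn : m ≤ |n|) :
    (IsResiduallyTorsionFreeNilpotent (BS m n) ↔ (m = 1 ∧ n = 1)) ∧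
    (IsResiduallyTorsionFreeNilpotent (BS m n) ↔
      Nonempty (BS m n ≃* Multiplicative (ℤ × ℤ))) := by
  have hn : n ≠ 0 := by
    rintro rfl
    rw [abs_zero] at hmn
    omega
  have rtfn_of_iso (h : Nonempty (BS m n ≃* Multiplicative (ℤ × ℤ))) :
      IsResiduallyTorsionFreeNilpotent (BS m n) :=
    .of_mulEquiv h.some
  have iso_of_eq : m = 1 ∧ n = 1 → Nonempty (BS m n ≃* Multiplicative (ℤ × ℤ)) := by
    rintro ⟨rfl, rfl⟩
    exact ⟨BS.oneOneMulEquiv⟩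
  have eq_of_rtfn (h : IsResiduallyTorsionFreeNilpotent (BS m n)) : m = 1 ∧ n = 1 := by
    obtain rfl : m = n := by_contra fun hne =>
      BS.bsa_ne_one hm.ne' hn (h.eq_one_of_conj_zpow_eq_zpow hne (BS.conj_bsa_zpow m n))
    lift m to ℕ using hm.le
    obtain rfl : m = 1 := by
      by_contra hm1
      have hcomm : Commute (bsa m m) (bst m m) := h.commute_of_pow_commute (k := m) (by omega)
        (by simpa using BS.commute_bsa_zpow_bst m)
      exact BS.commutatorElement_bsa_bst_ne_one (by omega)
        (commutatorElement_eq_one_iff_commute.mpr hcomm)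
    simp
  exact ⟨⟨eq_of_rtfn, rtfn_of_iso ∘ iso_of_eq⟩, ⟨iso_of_eq ∘ eq_of_rtfn, rtfn_of_iso⟩⟩
end
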